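/- There exists a binary sequence x ∈ {0,1}^ℕ that is normal in base 2 and satisfies lim_{n→∞} L_n(x)/log₂ n = 0. -/

import Mathlib

open Filter

open Classical in
/-- `L_n(x)`: the maximal length of a run of consecutive ones among the first `n`
digits (positions `1,…,n`) of the binary sequence `x`. -/
noncomputable def runL (x : ℕ → Bool) (n : ℕ) : ℕ :=
  Nat.findGreatest
    (fun j => ∃ i, i + j ≤ n ∧ ∀ k, 1 ≤ k → k ≤ j → x (i + k) = true) n

/-- `N(x, w, n)`: the number of occurrences of the block `w` in `x` starting at
a position `i` with `1 ≤ i ≤ n`. -/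
def occCount (x : ℕ → Bool) (w : List Bool) (n : ℕ) : ℕ :=
  ((Finset.Icc 1 n).filter
    (fun i => ∀ k ∈ Finset.range w.length, x (i + k) = w.getD k false)).card

/-- A binary sequence is normal in base 2 if every nonempty block `w` appears
with frequency `2^{-|w|}`. -/
def NormalBaseTwo (x : ℕ → Bool) : Prop :=
  ∀ w : List Bool, w ≠ [] →
    Tendsto (fun n : ℕ => (occCount x w n : ℝ) / (n : ℝ)) atTop
      (nhds (1 / 2 ^ w.length))

/-!
Block `q` of the sequence occupies the positions `2^(q²) ≤ i < 2^((q+1)²)` and reads the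
string `bitPattern (q+1)`, which writes `0, 1, 2, …` in turn as `(q+1)`-bit binary numbers,
least significant bit first.

Runs of ones: the lowest bits of consecutive numbers alternate and every block starts with a
zero, so up to a position `n` in block `q` no run is longer than `2q + 1`, while `log₂ n ≥ q²`.

Normality: `bitPattern p` has period `p·2^p`. In one period, a word `w` of length `L ≤ p`
starting at one of the offsets `r < p - L` inside a `p`-bit number lies within that number, so
it occurs there exactly `2^(p-L)` times; the other `L` offsets contribute at most `2^p` each.
Hence `w` has density within `L/p` of `2^(-L)` in `bitPattern p`, and the frequency of `w` among
the first `n` digits is a Cesàro mean of densities tending to `2^(-L)`, up to an error of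
`O(q·2^q)` per block, which is negligible against `n ≥ 2^(q²)`.
-/

open Finset Function

namespace Nat

section Count

variable {p q : ℕ → Prop} [DecidablePred p] [DecidablePred q]

theorem count_congr_of_lt {n : ℕ} (h : ∀ j < n, (p j ↔ q j)) : count p n = count q n := by
  simp only [count_eq_card_filter_range]
  exact congrArg card (filter_congr fun j hj => h j (mem_range.mp hj))

theorem count_mul_add_of_periodic {a : ℕ} (hp : Periodic p a) (k m : ℕ) :
    count p (k * a + m) = k * count p a + count p m := by
  have hshift : ∀ k m, count (fun j => p (k * a + j)) m = count p m := fun k m =>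
    count_congr_of_lt fun j _ => by rw [add_comm]; exact Iff.of_eq (hp.nat_mul k j)
  have hmul : ∀ k, count p (k * a) = k * count p a := fun k => by
    induction k with
    | zero => simp
    | succ k ih => rw [add_one_mul, count_add, hshift, ih, add_one_mul]
  rw [count_add, hshift, hmul]

theorem abs_count_sub_le_of_periodic {a : ℕ} (hp : Periodic p a) (ha : 0 < a) (n : ℕ) :
    |(count p n : ℝ) - n * (count p a / a)| ≤ count p a := by
  have ha' : (0 : ℝ) < a := by exact_mod_cast ha
  have hrem : (count p (n % a) : ℝ) ≤ count p a := by
    exact_mod_cast count_monotone p (mod_lt n ha).le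
  have hfrac : ((n % a : ℕ) : ℝ) * (count p a / a) ≤ count p a := by
    rw [mul_div_assoc', div_le_iff₀ ha', mul_comm]
    exact mul_le_mul_of_nonneg_left (by exact_mod_cast (mod_lt n ha).le) (by positivity)
  have hdiff : (count p n : ℝ) - n * (count p a / a)
      = count p (n % a) - ((n % a : ℕ) : ℝ) * (count p a / a) := by
    conv_lhs => rw [← Nat.div_add_mod' n a, count_mul_add_of_periodic hp]
    push_cast
    field_simp
    ring
  rw [hdiff, abs_le]
  constructor <;> nlinarith [(by positivity : (0 : ℝ) ≤ ((n % a : ℕ) : ℝ) * (count p a / a)),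
    (Nat.cast_nonneg _ : (0 : ℝ) ≤ count p (n % a))]

theorem abs_count_sub_count_le {n L : ℕ} (h : ∀ j, j + L ≤ n → (p j ↔ q j)) :
    |(count p n : ℝ) - count q n| ≤ L := by
  have hsplit : n = (n - L) + (n - (n - L)) := by omega
  have hhead : count p (n - L) = count q (n - L) := count_congr_of_lt fun j hj => h j (by omega)
  have htail : ∀ (r : ℕ → Prop) [DecidablePred r], (count r (n - (n - L)) : ℝ) ≤ L := fun r _ => by
    exact_mod_cast (count_le (p := r)).trans (by omega)
  rw [hsplit, count_add, count_add, hhead]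
  push_cast
  rw [abs_le]; constructor <;>
    linarith [htail (fun k => p (n - L + k)), htail (fun k => q (n - L + k)),
      (Nat.cast_nonneg _ : (0 : ℝ) ≤ count (fun k => p (n - L + k)) (n - (n - L))),
      (Nat.cast_nonneg _ : (0 : ℝ) ≤ count (fun k => q (n - L + k)) (n - (n - L)))]

theorem count_mul_eq_sum_count (a N : ℕ) :
    count p (N * a) = ∑ r ∈ range a, count (fun u => p (u * a + r)) N := by
  induction N with
  | zero => simp
  | succ N ih =>
    rw [add_one_mul, count_add, ih, count_eq_card_filter_range _ a, card_filter, ← sum_add_distrib]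
    refine sum_congr rfl fun r _ => ?_
    rw [count_succ]

end Count

theorem testBit_div_two_pow_mod_two_pow (u r L k : ℕ) :
    (u / 2 ^ r % 2 ^ L).testBit k = (decide (k < L) && u.testBit (r + k)) := by
  rw [testBit_mod_two_pow, testBit_div_two_pow, add_comm]

theorem count_testBit_window_eq (w : List Bool) {r p : ℕ} (h : r + w.length ≤ p) :
    count (fun u => ∀ k < w.length, u.testBit (r + k) = w.getD k false) (2 ^ p)
      = 2 ^ (p - w.length) := by
  -- The bits `r, …, r + |w| - 1` of `u` spell `w` iff `u / 2^r % 2^|w|` is the number `v` whose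
  -- binary digits are `w`; this condition has period `2^(r + |w|)` and holds on `2^r` residues.
  set v := (BitVec.ofBoolListLE w).toNat
  have hv : ∀ k, v.testBit k = w.getD k false := fun k => by
    rw [BitVec.testBit_toNat, BitVec.getLsbD_ofBoolListLE]
  have hwindow : ∀ u, (∀ k < w.length, u.testBit (r + k) = w.getD k false) ↔
      u / 2 ^ r % 2 ^ w.length = v := by
    refine fun u => ⟨fun hu => eq_of_testBit_eq fun k => ?_, fun hu k hk => ?_⟩
    · rw [testBit_div_two_pow_mod_two_pow, hv]
      by_cases hk : k < w.length
      · simp [hk, hu k hk]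
      · rw [List.getD_eq_default w false (not_lt.mp hk)]; simp [hk]
    · rw [← hv, ← hu, testBit_div_two_pow_mod_two_pow]
      simp [hk]
  have hperiodic : Periodic (fun u => u / 2 ^ r % 2 ^ w.length = v) (2 ^ (r + w.length)) :=
    fun u => by
      simp only [pow_add, mul_comm (2 ^ r), Nat.add_mul_div_right _ _ (Nat.two_pow_pos r),
        Nat.add_mod_right]
  have hperiod : count (fun u => u / 2 ^ r % 2 ^ w.length = v) (2 ^ (r + w.length)) = 2 ^ r := by
    have hvlt : v < 2 ^ w.length := BitVec.isLt _
    rw [count_eq_card_filter_range]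
    convert card_Ico (v * 2 ^ r) ((v + 1) * 2 ^ r) using 2
    · ext u
      have hdiv : u / 2 ^ r = v ↔ v * 2 ^ r ≤ u ∧ u < (v + 1) * 2 ^ r := by
        rw [Nat.div_eq_iff (Nat.two_pow_pos r), add_one_mul]
        have := Nat.two_pow_pos r
        omega
      have hlt : u < 2 ^ (r + w.length) ↔ u / 2 ^ r < 2 ^ w.length := by
        rw [Nat.div_lt_iff_lt_mul (Nat.two_pow_pos r), pow_add, mul_comm]
      simp only [mem_filter, mem_range, mem_Ico, hlt, ← hdiv]
      constructor
      · rintro ⟨hu, huv⟩; rwa [Nat.mod_eq_of_lt hu] at huv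
      · intro hu; rw [hu]; exact ⟨hvlt, Nat.mod_eq_of_lt hvlt⟩
    · rw [add_one_mul, Nat.add_sub_cancel_left]
  have hp : 2 ^ p = 2 ^ (p - (r + w.length)) * 2 ^ (r + w.length) + 0 := by
    rw [add_zero, ← pow_add, Nat.sub_add_cancel h]
  rw [count_congr_of_lt fun u _ => hwindow u, hp, count_mul_add_of_periodic hperiodic, hperiod,
    count_zero, add_zero, ← pow_add]
  congr 1
  omega

end Nat

def bitPattern (p j : ℕ) : Bool := (j / p).testBit (j % p)

theorem bitPattern_periodic (p : ℕ) : Periodic (bitPattern p) (p * 2 ^ p) := fun j => by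
  rcases Nat.eq_zero_or_pos p with rfl | hp
  · simp
  · simp only [bitPattern, Nat.add_mul_div_left _ _ hp, Nat.add_mul_mod_self_left, add_comm (j / p),
      Nat.testBit_two_pow_add_gt (Nat.mod_lt j hp)]

theorem bitPattern_mul_add {p r : ℕ} (u : ℕ) (hr : r < p) :
    bitPattern p (u * p + r) = u.testBit r := by
  have hp : 0 < p := by omega
  simp only [bitPattern, add_comm (u * p), Nat.add_mul_mod_self_right, Nat.mod_eq_of_lt hr,
    Nat.add_mul_div_right _ _ hp, Nat.div_eq_of_lt hr, zero_add]

theorem bitPattern_two_mul_mul (p t : ℕ) : bitPattern p (2 * p * t) = false := by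
  rcases Nat.eq_zero_or_pos p with rfl | hp
  · simp [bitPattern]
  · rw [show 2 * p * t = 2 * t * p + 0 by ring, bitPattern_mul_add _ hp, Nat.testBit_zero]
    simp

theorem bitPattern_zero (p : ℕ) : bitPattern p 0 = false := by simp [bitPattern]

def OccursAt (y : ℕ → Bool) (w : List Bool) (i : ℕ) : Prop :=
  ∀ k < w.length, y (i + k) = w.getD k false

instance (y : ℕ → Bool) (w : List Bool) : DecidablePred (OccursAt y w) := fun _ => by
  unfold OccursAt; infer_instance

theorem Function.Periodic.occursAt {y : ℕ → Bool} {a : ℕ} (h : Periodic y a) (w : List Bool) :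
    Periodic (OccursAt y w) a := fun i => by
  simp only [OccursAt, add_right_comm i a, h _]

theorem occursAt_bitPattern_mul_add_iff {p r : ℕ} {w : List Bool} (h : r + w.length ≤ p) (u : ℕ) :
    OccursAt (bitPattern p) w (u * p + r) ↔ ∀ k < w.length, u.testBit (r + k) = w.getD k false := by
  refine forall₂_congr fun k hk => ?_
  rw [add_assoc, bitPattern_mul_add u (by omega)]

noncomputable def patternDensity (w : List Bool) (p : ℕ) : ℝ :=
  Nat.count (OccursAt (bitPattern p) w) (p * 2 ^ p) / (p * 2 ^ p : ℕ)

theorem count_occursAt_bitPattern_bounds (w : List Bool) {a p : ℕ} (hp : a + w.length = p) :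
    a * 2 ^ a ≤ Nat.count (OccursAt (bitPattern p) w) (p * 2 ^ p)
    ∧ Nat.count (OccursAt (bitPattern p) w) (p * 2 ^ p) ≤ a * 2 ^ a + w.length * 2 ^ p := by
  subst hp
  set p := a + w.length
  have haligned : ∀ r ∈ range a,
      Nat.count (fun u => OccursAt (bitPattern p) w (u * p + r)) (2 ^ p) = 2 ^ a := fun r hr => by
    rw [Nat.count_congr_of_lt fun u _ => occursAt_bitPattern_mul_add_iff
        (by have := mem_range.mp hr; omega) u,
      Nat.count_testBit_window_eq w (by have := mem_range.mp hr; omega), Nat.add_sub_cancel]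
  rw [mul_comm p, Nat.count_mul_eq_sum_count, sum_range_add, sum_congr rfl haligned,
    sum_const, card_range, smul_eq_mul]
  refine ⟨Nat.le_add_right _ _, Nat.add_le_add_left ?_ _⟩
  simpa using sum_le_card_nsmul (range w.length) _ _ fun k _ => Nat.count_le _

theorem abs_patternDensity_sub_le {w : List Bool} {p : ℕ} (hp : 0 < p) (hL : w.length ≤ p) :
    |patternDensity w p - 1 / 2 ^ w.length| ≤ w.length / p := by
  obtain ⟨a, rfl⟩ : ∃ a, p = a + w.length := ⟨p - w.length, by omega⟩
  obtain ⟨hlo, hhi⟩ := count_occursAt_bitPattern_bounds w (a := a) rfl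
  set c := Nat.count (OccursAt (bitPattern (a + w.length)) w) ((a + w.length) * 2 ^ (a + w.length))
  have hlo' : (a : ℝ) * 2 ^ a ≤ c := by exact_mod_cast hlo
  have hhi' : (c : ℝ) ≤ a * 2 ^ a + w.length * (2 ^ a * 2 ^ w.length) := by
    rw [← pow_add]; exact_mod_cast hhi
  have hp' : (0 : ℝ) < a + w.length := by exact_mod_cast hp
  have hD : (0 : ℝ) < (a + w.length) * (2 ^ a * 2 ^ w.length) := by positivity
  have h2L : (1 : ℝ) ≤ 2 ^ w.length := one_le_pow₀ (by norm_num)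
  have hsub : patternDensity w (a + w.length) - 1 / 2 ^ w.length
      = (c - (a + w.length) * 2 ^ a) / ((a + w.length) * (2 ^ a * 2 ^ w.length)) := by
    rw [patternDensity]
    push_cast
    rw [pow_add (2 : ℝ)]
    field_simp
    rfl
  have hbound : (w.length : ℝ) / (a + w.length : ℕ)
      = w.length * (2 ^ a * 2 ^ w.length) / ((a + w.length) * (2 ^ a * 2 ^ w.length)) := by
    push_cast
    field_simp
  rw [hsub, hbound, abs_div, abs_of_pos hD]
  refine div_le_div_of_nonneg_right (abs_le.mpr ⟨?_, ?_⟩) hD.le <;>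
    nlinarith [(by positivity : (0 : ℝ) ≤ w.length * 2 ^ a)]

theorem tendsto_patternDensity (w : List Bool) :
    Tendsto (patternDensity w) atTop (nhds (1 / 2 ^ w.length)) := by
  rw [tendsto_iff_norm_sub_tendsto_zero]
  refine squeeze_zero' (Eventually.of_forall fun p => norm_nonneg _) ?_
    (tendsto_const_div_atTop_nhds_zero_nat (w.length : ℝ))
  filter_upwards [eventually_ge_atTop (w.length + 1)] with p hp
  exact abs_patternDensity_sub_le (by omega) (by omega)

def blockStart (q : ℕ) : ℕ := 2 ^ q ^ 2

def blockIdx (i : ℕ) : ℕ := Nat.sqrt (Nat.log 2 i)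

theorem blockStart_lt_succ (q : ℕ) : blockStart q < blockStart (q + 1) :=
  Nat.pow_lt_pow_right one_lt_two (Nat.pow_lt_pow_left q.lt_succ_self two_ne_zero)

theorem blockStart_zero : blockStart 0 = 1 := rfl

theorem blockStart_mono : Monotone blockStart :=
  monotone_nat_of_le_succ fun q => (blockStart_lt_succ q).le

theorem blockIdx_eq_of_mem {q i : ℕ} (h₁ : blockStart q ≤ i) (h₂ : i < blockStart (q + 1)) :
    blockIdx i = q := by
  have hi : i ≠ 0 := (Nat.two_pow_pos _).trans_le h₁ |>.ne'
  rw [blockIdx, eq_comm, Nat.eq_sqrt']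
  exact ⟨(Nat.le_log_iff_pow_le one_lt_two hi).2 h₁, (Nat.log_lt_iff_lt_pow one_lt_two hi).2 h₂⟩

theorem blockStart_blockIdx_le {i : ℕ} (hi : i ≠ 0) : blockStart (blockIdx i) ≤ i :=
  (Nat.le_log_iff_pow_le one_lt_two hi).1 (Nat.sqrt_le' _)

theorem lt_blockStart_blockIdx_add_one (i : ℕ) : i < blockStart (blockIdx i + 1) := by
  rcases eq_or_ne i 0 with rfl | hi
  · exact Nat.two_pow_pos _
  · exact (Nat.log_lt_iff_lt_pow one_lt_two hi).1 (Nat.lt_succ_sqrt' _)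

theorem blockIdx_mono : Monotone blockIdx := fun _ _ h => Nat.sqrt_le_sqrt (Nat.log_mono_right h)

theorem tendsto_blockIdx_atTop : Tendsto blockIdx atTop atTop :=
  tendsto_atTop_atTop.2 fun q => ⟨blockStart q, fun _ hi =>
    (blockIdx_eq_of_mem le_rfl (blockStart_lt_succ q)).symm.trans_le (blockIdx_mono hi)⟩

def blockSeq (i : ℕ) : Bool := bitPattern (blockIdx i + 1) (i - blockStart (blockIdx i))

theorem blockSeq_of_mem {q i : ℕ} (h₁ : blockStart q ≤ i) (h₂ : i < blockStart (q + 1)) :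
    blockSeq i = bitPattern (q + 1) (i - blockStart q) := by
  rw [blockSeq, blockIdx_eq_of_mem h₁ h₂]

theorem exists_lt_blockSeq_add_eq_false {i : ℕ} (hi : i ≠ 0) :
    ∃ d < 2 * (blockIdx i + 1), blockSeq (i + d) = false := by
  -- Offsets `2 (q + 1) t` in block `q` carry a zero; if the block ends before the next such
  -- offset, the zero at the start of block `q + 1` is reached instead.
  set q := blockIdx i
  have hs : blockStart q ≤ i := blockStart_blockIdx_le hi
  have hs' : i < blockStart (q + 1) := lt_blockStart_blockIdx_add_one i
  obtain ⟨t, ht₁, ht₂⟩ : ∃ t, i - blockStart q ≤ 2 * (q + 1) * t ∧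
      2 * (q + 1) * t < i - blockStart q + 2 * (q + 1) := by
    set m := 2 * (q + 1)
    refine ⟨(i - blockStart q + m - 1) / m, ?_⟩
    have := Nat.div_add_mod (i - blockStart q + m - 1) m
    have := Nat.mod_lt (i - blockStart q + m - 1) (by omega : 0 < m)
    omega
  by_cases hj : blockStart q + 2 * (q + 1) * t < blockStart (q + 1)
  · refine ⟨blockStart q + 2 * (q + 1) * t - i, by omega, ?_⟩
    rw [show i + (blockStart q + 2 * (q + 1) * t - i) = blockStart q + 2 * (q + 1) * t by omega,
      blockSeq_of_mem (by omega) hj, Nat.add_sub_cancel_left, bitPattern_two_mul_mul]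
  · refine ⟨blockStart (q + 1) - i, by omega, ?_⟩
    rw [show i + (blockStart (q + 1) - i) = blockStart (q + 1) by omega,
      blockSeq_of_mem le_rfl (blockStart_lt_succ _), Nat.sub_self, bitPattern_zero]

theorem runL_le_of_forall {x : ℕ → Bool} {n B : ℕ}
    (h : ∀ i j, i + j ≤ n → (∀ k, 1 ≤ k → k ≤ j → x (i + k) = true) → j ≤ B) : runL x n ≤ B := by
  classical
  by_cases h0 : runL x n = 0
  · simp [h0]
  · obtain ⟨i, hij, hrun⟩ := Nat.findGreatest_of_ne_zero rfl h0
    exact h i _ hij hrun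

theorem runL_blockSeq_le (n : ℕ) : runL blockSeq n ≤ 2 * blockIdx n + 1 := by
  refine runL_le_of_forall fun i j hij hrun => ?_
  by_contra! hj
  obtain ⟨d, hd, hzero⟩ := exists_lt_blockSeq_add_eq_false (i := i + 1) (by omega)
  have hmono := blockIdx_mono (show i + 1 ≤ n by omega)
  have hone := hrun (d + 1) (by omega) (by omega)
  rw [show i + (d + 1) = i + 1 + d by omega, hzero] at hone
  exact Bool.false_ne_true hone

theorem tendsto_runL_blockSeq_div_logb :
    Tendsto (fun n : ℕ => (runL blockSeq n : ℝ) / Real.logb 2 n) atTop (nhds 0) := by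
  have hlog : ∀ n : ℕ, ((blockIdx n ^ 2 : ℕ) : ℝ) ≤ Real.logb 2 n := fun n => by
    have := Real.natLog_le_logb n 2
    push_cast at this
    exact (Nat.cast_le.2 (Nat.sqrt_le' _)).trans this
  refine squeeze_zero' (Eventually.of_forall fun n => div_nonneg (Nat.cast_nonneg _)
    ((Nat.cast_nonneg _).trans (hlog n))) ?_
    ((tendsto_const_div_atTop_nhds_zero_nat 3).comp tendsto_blockIdx_atTop)
  filter_upwards [tendsto_blockIdx_atTop.eventually_ge_atTop 1] with n hn
  have hp : (1 : ℝ) ≤ blockIdx n := by exact_mod_cast hn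
  have hrun : (runL blockSeq n : ℝ) ≤ 2 * blockIdx n + 1 := by exact_mod_cast runL_blockSeq_le n
  calc (runL blockSeq n : ℝ) / Real.logb 2 n
      ≤ (2 * blockIdx n + 1) / (blockIdx n ^ 2 : ℕ) :=
        div_le_div₀ (by positivity) hrun (by positivity) (hlog n)
    _ ≤ 3 / blockIdx n := by
        rw [div_le_div_iff₀ (by positivity) (by positivity)]
        push_cast
        nlinarith

theorem norm_sum_Ico_le_of_blocks {E : Type*} [SeminormedAddCommGroup E] {s : ℕ → ℕ}
    (hs : Monotone s) {g : ℕ → E} {C : ℕ → ℝ}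
    (hC : ∀ q N, s q ≤ N → N ≤ s (q + 1) → ‖∑ i ∈ Ico (s q) N, g i‖ ≤ C q) (p : ℕ) :
    ∀ N, s 0 ≤ N → N ≤ s p → ‖∑ i ∈ Ico (s 0) N, g i‖ ≤ ∑ q ∈ range p, C q := by
  induction p with
  | zero => intro N h₀ h; simp [le_antisymm h h₀]
  | succ p ih =>
    intro N h₀ hN
    have hCp : 0 ≤ C p := by simpa using hC p (s p) le_rfl (hs p.le_succ)
    rw [sum_range_succ]
    by_cases hNp : N ≤ s p
    · linarith [ih N h₀ hNp]
    · rw [← sum_Ico_consecutive _ (hs p.zero_le) (le_of_not_ge hNp)]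
      exact (norm_add_le _ _).trans
        (add_le_add (ih _ (hs p.zero_le) le_rfl) (hC p N (le_of_not_ge hNp) hN))

theorem abs_sum_block_le (w : List Bool) {q N : ℕ} (h₁ : blockStart q ≤ N)
    (h₂ : N ≤ blockStart (q + 1)) :
    |∑ i ∈ Ico (blockStart q) N,
        ((if OccursAt blockSeq w i then 1 else 0) - patternDensity w (blockIdx i + 1))|
      ≤ (q + 1) * 2 ^ (q + 1) + w.length := by
  set s := blockStart q
  set P := OccursAt (bitPattern (q + 1)) w
  have hsum : ∑ i ∈ Ico s N,
        ((if OccursAt blockSeq w i then 1 else 0) - patternDensity w (blockIdx i + 1))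
      = Nat.count (fun j => OccursAt blockSeq w (s + j)) (N - s)
        - (N - s : ℕ) * patternDensity w (q + 1) := by
    rw [sum_Ico_eq_sum_range, sum_sub_distrib, sum_boole, Nat.count_eq_card_filter_range,
      sum_congr rfl fun j hj => by
        rw [blockIdx_eq_of_mem (Nat.le_add_right s j) (by have := mem_range.mp hj; omega)],
      sum_const, card_range, nsmul_eq_mul]
  have hagree : ∀ j, j + w.length ≤ N - s → (OccursAt blockSeq w (s + j) ↔ P j) :=
    fun j hj => forall₂_congr fun k hk => by
      rw [blockSeq_of_mem (q := q) (by omega) (by omega), show s + j + k - s = j + k by omega]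
  have hperiodic := Nat.abs_count_sub_le_of_periodic ((bitPattern_periodic (q + 1)).occursAt w)
    (by positivity) (N - s)
  have hperiod : (Nat.count P ((q + 1) * 2 ^ (q + 1)) : ℝ) ≤ (q + 1) * 2 ^ (q + 1) := by
    exact_mod_cast Nat.count_le _
  rw [hsum]
  calc _ ≤ |(Nat.count (fun j => OccursAt blockSeq w (s + j)) (N - s) : ℝ) - Nat.count P (N - s)|
        + |(Nat.count P (N - s) : ℝ) - (N - s : ℕ) * patternDensity w (q + 1)| := abs_sub_le _ _ _
    _ ≤ w.length + (q + 1) * 2 ^ (q + 1) :=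
        add_le_add (Nat.abs_count_sub_count_le hagree) (hperiodic.trans hperiod)
    _ = _ := add_comm _ _

theorem sum_block_bound_mul_two_pow_le (L : ℕ) {p : ℕ} (hp : 5 ≤ p) :
    (∑ q ∈ range (p + 1), ((q + 1) * 2 ^ (q + 1) + L)) * 2 ^ p ≤ (L + 1) * 2 ^ p ^ 2 := by
  have hterm : ∀ q ∈ range (p + 1), (q + 1) * 2 ^ (q + 1) + L ≤ (L + 1) * (2 ^ p * 2 ^ (p + 1)) :=
    fun q hq => by
      have hqp := mem_range.mp hq
      have h₁ : q + 1 ≤ 2 ^ p := by have := Nat.lt_two_pow_self (n := p); omega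
      have h₂ : (q + 1) * 2 ^ (q + 1) ≤ 2 ^ p * 2 ^ (p + 1) :=
        Nat.mul_le_mul h₁ (Nat.pow_le_pow_right two_pos hqp)
      have h₃ : 1 ≤ 2 ^ p * 2 ^ (p + 1) := Nat.one_le_iff_ne_zero.2 (by positivity)
      nlinarith
  have hp2 : 2 ^ (4 * p + 1) ≤ 2 ^ p ^ 2 := Nat.pow_le_pow_right two_pos (by nlinarith)
  calc (∑ q ∈ range (p + 1), ((q + 1) * 2 ^ (q + 1) + L)) * 2 ^ p
      ≤ ((p + 1) * ((L + 1) * (2 ^ p * 2 ^ (p + 1)))) * 2 ^ p := by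
        gcongr
        simpa using sum_le_card_nsmul _ _ _ hterm
    _ ≤ (2 ^ p * ((L + 1) * (2 ^ p * 2 ^ (p + 1)))) * 2 ^ p := by
        gcongr; exact Nat.lt_two_pow_self
    _ = (L + 1) * 2 ^ (4 * p + 1) := by ring
    _ ≤ (L + 1) * 2 ^ p ^ 2 := by gcongr

theorem tendsto_sum_block_bound_div (L : ℕ) :
    Tendsto (fun p : ℕ => (∑ q ∈ range (p + 1), ((q + 1) * 2 ^ (q + 1) + L : ℝ)) / 2 ^ p ^ 2)
      atTop (nhds 0) := by
  have hlim : Tendsto (fun p : ℕ => ((L : ℝ) + 1) * (1 / 2) ^ p) atTop (nhds 0) := by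
    simpa using (tendsto_pow_atTop_nhds_zero_of_lt_one (by norm_num : (0 : ℝ) ≤ 1 / 2)
      (by norm_num)).const_mul ((L : ℝ) + 1)
  refine squeeze_zero' (Eventually.of_forall fun p => by positivity) ?_ hlim
  filter_upwards [eventually_ge_atTop 5] with p hp
  have h := sum_block_bound_mul_two_pow_le L hp
  rw [one_div_pow, mul_one_div, div_le_div_iff₀ (by positivity) (by positivity)]
  exact_mod_cast h

theorem occCount_eq_sum (x : ℕ → Bool) (w : List Bool) (n : ℕ) :
    (occCount x w n : ℝ) = ∑ i ∈ range n, if OccursAt x w (1 + i) then 1 else 0 := by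
  have h := sum_Ico_eq_sum_range (fun i => if OccursAt x w i then (1 : ℝ) else 0) 1 (n + 1)
  rw [Nat.add_sub_cancel, Ico_add_one_right_eq_Icc, sum_boole] at h
  rw [← h, occCount]
  simp only [OccursAt, mem_range]

theorem normalBaseTwo_blockSeq : NormalBaseTwo blockSeq := by
  intro w _
  set g : ℕ → ℝ := fun i =>
    (if OccursAt blockSeq w i then 1 else 0) - patternDensity w (blockIdx i + 1)
  have hsplit : ∀ n : ℕ, (occCount blockSeq w n : ℝ) / n
      = (n : ℝ)⁻¹ * ∑ i ∈ range n, g (1 + i)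
        + (n : ℝ)⁻¹ * ∑ i ∈ range n, patternDensity w (blockIdx (1 + i) + 1) := fun n => by
    rw [occCount_eq_sum, div_eq_inv_mul, ← mul_add, ← sum_add_distrib]
    simp [g]
  have hdensity : Tendsto (fun n : ℕ => (n : ℝ)⁻¹ * ∑ i ∈ range n,
      patternDensity w (blockIdx (1 + i) + 1)) atTop (nhds (1 / 2 ^ w.length)) :=
    ((tendsto_patternDensity w).comp (tendsto_atTop_mono (fun i =>
      (blockIdx_mono (Nat.le_add_left i 1)).trans (Nat.le_succ _)) tendsto_blockIdx_atTop)).cesaro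
  have herror : Tendsto (fun n : ℕ => (n : ℝ)⁻¹ * ∑ i ∈ range n, g (1 + i)) atTop (nhds 0) := by
    refine squeeze_zero_norm' ?_
      ((tendsto_sum_block_bound_div w.length).comp tendsto_blockIdx_atTop)
    filter_upwards [eventually_ne_atTop 0] with n hn
    have hblocks := norm_sum_Ico_le_of_blocks blockStart_mono (g := g)
      (fun q N h₁ h₂ => abs_sum_block_le w h₁ h₂) (blockIdx n + 1) (n + 1)
      (by rw [blockStart_zero]; omega) (lt_blockStart_blockIdx_add_one n)
    rw [blockStart_zero, sum_Ico_eq_sum_range, Nat.add_sub_cancel] at hblocks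
    have hn : (blockStart (blockIdx n) : ℝ) ≤ n := by exact_mod_cast blockStart_blockIdx_le hn
    rw [norm_mul, norm_inv, Real.norm_natCast, inv_mul_eq_div]
    refine (div_le_div₀ (by positivity) hblocks (Nat.cast_pos.2 (Nat.two_pow_pos _)) hn).trans_eq ?_
    simp only [Nat.cast_pow, Nat.cast_ofNat, comp_apply]
  simpa [hsplit] using herror.add hdensity

/-- There is a binary sequence that is normal in base 2 and satisfies
`L_n(x)/log₂ n → 0`. -/
theorem normal_runratio_tendsto_zero :
    ∃ x : ℕ → Bool, NormalBaseTwo x ∧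
      Tendsto (fun n : ℕ => (runL x n : ℝ) / Real.logb 2 (n : ℝ)) atTop (nhds 0) :=
  ⟨blockSeq, normalBaseTwo_blockSeq, tendsto_runL_blockSeq_div_logb⟩
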